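/- Let τ > 0 and let (X, υ) be a compact metric measure space with more than one point such that υ is atomless and (X, υ) satisfies the (1, 1)-Poincaré inequality for τ. Then h(X) ≥ 1/(τ · diam X), where diam X is the diameter of X. -/

import Mathlib

open MeasureTheory Metric Filter Set
open scoped Topology NNReal ENNReal
open Classical

variable {X : Type*} [MetricSpace X]

/-- A real-valued function is Lipschitz (with some constant). -/
def IsLipFun (f : X → ℝ) : Prop := ∃ K : ℝ≥0, LipschitzWith K f

/-- The pointwise Lipschitz constant `Lip f (x)`:
`0` if `x` is isolated, and otherwise the limit (= infimum, by monotonicity)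
as `r → 0` of `sup_{y ∈ B_r(x), y ≠ x} |f x - f y| / dist x y`. -/
noncomputable def pLip (f : X → ℝ) (x : X) : ℝ :=
  if 𝓝[≠] x = ⊥ then 0
  else ⨅ r : Ioi (0:ℝ), sSup ((fun y => |f x - f y| / dist x y) '' (ball x r.1 \ {x}))

/-- `γ` is a (unit-speed) minimal geodesic from `x` to `y`. -/
def IsMinGeodesic (γ : ℝ → X) (x y : X) : Prop :=
  γ 0 = x ∧ γ (dist x y) = y ∧
    ∀ s ∈ Icc (0:ℝ) (dist x y), ∀ t ∈ Icc (0:ℝ) (dist x y), dist (γ s) (γ t) = |s - t|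

/-- A metric space is geodesic if any two points are joined by a minimal geodesic. -/
def IsGeodesicSpace (Y : Type*) [MetricSpace Y] : Prop :=
  ∀ x y : Y, ∃ γ : ℝ → Y, IsMinGeodesic γ x y

section MeasureDefs
variable [MeasurableSpace X] (υ : Measure X)

/-- The doubling condition for `κ`. -/
def DoublingFor (κ : ℝ) : Prop :=
  ∀ x : X, ∀ r : ℝ, 0 < r → υ (ball x (2*r)) ≤ (2:ℝ≥0∞) ^ κ * υ (ball x r)

/-- The `(q,p)`-Poincaré inequality for `τ` (for Lipschitz functions). -/
def PoincareFor (q p τ : ℝ) : Prop :=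
  ∀ x : X, ∀ r : ℝ, 0 < r → ∀ f : X → ℝ, IsLipFun f →
    (⨍ y in ball x r, |f y - ⨍ z in ball x r, f z ∂υ| ^ q ∂υ) ^ (1/q) ≤
      τ * r * ((⨍ y in ball x r, (pLip f y) ^ p ∂υ) ^ (1/p))

/-- `F_g(x,y)`: the infimum over minimal geodesics `γ` from `x` to `y` of
`∫_0^{d(x,y)} g(γ(s)) ds`. -/
noncomputable def segF (g : X → ℝ≥0∞) (x y : X) : ℝ≥0∞ :=
  ⨅ γ ∈ {γ : ℝ → X | IsMinGeodesic γ x y}, ∫⁻ s in Icc (0:ℝ) (dist x y), g (γ s)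

/-- The segment inequality for `lam`. -/
def SegmentIneqFor (lam : ℝ) : Prop :=
  ∀ x : X, ∀ r : ℝ, 0 < r → ∀ g : X → ℝ≥0∞, Measurable g →
    (∫⁻ pr in (ball x r) ×ˢ (ball x r), segF g pr.1 pr.2 ∂(υ.prod υ)) ≤
      ENNReal.ofReal (lam * r) * υ (ball x r) * ∫⁻ z in ball x (3*r), g z ∂υ

/-- The first eigenvalue of the `p`-Laplacian (`∞` if there is no competitor). -/
noncomputable def lambda1 (p : ℝ) : ℝ≥0∞ :=
  ⨅ f ∈ {f : X → ℝ | IsLipFun f ∧ (∫ x, |f x| ^ p ∂υ) = 1 ∧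
      (∫ x, |f x| ^ (p-2) * f x ∂υ) = 0},
    ENNReal.ofReal (∫ x, (pLip f x) ^ p ∂υ)

/-- Minkowski's exterior boundary measure
`υ⁺(A) = liminf_{r → 0+} (υ(B_r(A)) - υ(A))/r`. -/
noncomputable def minkBoundary (A : Set X) : ℝ≥0∞ :=
  Filter.liminf (fun r : ℝ => (υ (thickening r A) - υ A) / ENNReal.ofReal r) (𝓝[>] (0:ℝ))

/-- The Cheeger constant (`∞` if there is no competitor). -/
noncomputable def cheeger : ℝ≥0∞ :=
  ⨅ A ∈ {A : Set X | MeasurableSet A ∧ 0 < υ A ∧ υ A ≤ 1/2}, minkBoundary υ A / υ A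

/-- `λ_{1,p}` for `p ∈ [1, ∞)`, with `λ_{1,1} := h(X)` the Cheeger constant. -/
noncomputable def lam1 (p : ℝ) : ℝ≥0∞ := if p = 1 then cheeger υ else lambda1 υ p

/-- `c_p(f) = inf_{c ∈ ℝ} (∫ |f - c|^p dυ)^{1/p}`. -/
noncomputable def cP (p : ℝ) (f : X → ℝ) : ℝ :=
  ⨅ c : ℝ, (∫ x, |f x - c| ^ p ∂υ) ^ (1/p)

/-- `M` is a median of `f`. -/
def IsMedian (f : X → ℝ) (M : ℝ) : Prop :=
  (1/2 : ℝ≥0∞) ≤ υ {x | M ≤ f x} ∧ (1/2 : ℝ≥0∞) ≤ υ {x | f x ≤ M}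

end MeasureDefs

/-- The global Lipschitz constant `sup_{a ≠ b} |f a - f b| / dist a b`. -/
noncomputable def globalLip (f : X → ℝ) : ℝ :=
  sSup {L : ℝ | ∃ a b : X, a ≠ b ∧ L = |f a - f b| / dist a b}

/-!
Test the Poincaré inequality, on a ball containing all of `X`, against a Lipschitz cutoff `f`
that equals `1` on a neighbourhood of `A`, vanishes off the `ρ`-thickening `A_ρ` and has slope
`1/s` for some `s < ρ`. Its mean deviation is at least `2 υ(A) (1 - υ(A_ρ))`, while
`Lip f ≤ 1/s` is supported in `A_ρ \ A` because `Lip f` vanishes where `f` is locally constant.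
Letting `s → ρ` gives `2 υ(A) (1 - υ(A_ρ)) ρ ≤ τ diam X (υ(A_ρ) - υ(A))`, and letting `ρ → 0`
gives `υ⁺(A) ≥ 2 υ(A) (1 - υ(A)) / (τ diam X) ≥ υ(A) / (τ diam X)` as long as
`υ(closure A) = υ(A)`; otherwise `υ⁺(A) = ∞`.
-/

lemma pLip_nonneg (f : X → ℝ) (x : X) : 0 ≤ pLip f x := by
  unfold pLip
  split_ifs
  · exact le_rfl
  · have : Nonempty (Ioi (0 : ℝ)) := ⟨⟨1, mem_Ioi.2 one_pos⟩⟩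
    refine le_ciInf fun r => Real.sSup_nonneg ?_
    rintro _ ⟨y, -, rfl⟩
    positivity

lemma pLip_le_of_forall_mem_ball {f : X → ℝ} {x : X} {ρ L : ℝ} (hρ : 0 < ρ) (hL : 0 ≤ L)
    (h : ∀ y ∈ ball x ρ, |f x - f y| ≤ L * dist x y) : pLip f x ≤ L := by
  unfold pLip
  split_ifs
  · exact hL
  · have hbdd : BddBelow (range fun r : Ioi (0 : ℝ) =>
        sSup ((fun y => |f x - f y| / dist x y) '' (ball x r.1 \ {x}))) := by
      refine ⟨0, ?_⟩
      rintro _ ⟨r, rfl⟩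
      refine Real.sSup_nonneg ?_
      rintro _ ⟨y, -, rfl⟩
      positivity
    refine ciInf_le_of_le hbdd ⟨ρ, hρ⟩ (Real.sSup_le ?_ hL)
    rintro _ ⟨y, ⟨hy, hyx⟩, rfl⟩
    have hd : 0 < dist x y := dist_pos.2 (Ne.symm hyx)
    exact (div_le_iff₀ hd).2 (h y hy)

lemma pLip_le_of_lipschitzWith {f : X → ℝ} {K : ℝ≥0} (hf : LipschitzWith K f) (x : X) :
    pLip f x ≤ K :=
  pLip_le_of_forall_mem_ball one_pos K.coe_nonneg fun y _ => by
    simpa only [Real.dist_eq] using hf.dist_le_mul x y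

lemma pLip_eq_zero_of_eventuallyEq {f : X → ℝ} {x : X} (h : f =ᶠ[𝓝 x] fun _ => f x) :
    pLip f x = 0 := by
  obtain ⟨ρ, hρ, hconst⟩ := Metric.eventually_nhds_iff.1 h
  refine le_antisymm (pLip_le_of_forall_mem_ball hρ le_rfl fun y hy => ?_) (pLip_nonneg f x)
  rw [hconst hy, sub_self, abs_zero, zero_mul]

section Cutoff

noncomputable def thickeningCutoff (A : Set X) (r s : ℝ) (y : X) : ℝ :=
  min 1 (max 0 ((r - infDist y A) / s))

variable {A : Set X} {r s : ℝ}

lemma thickeningCutoff_le_one (y : X) : thickeningCutoff A r s y ≤ 1 := min_le_left _ _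

lemma thickeningCutoff_nonneg (y : X) : 0 ≤ thickeningCutoff A r s y :=
  le_min zero_le_one (le_max_left _ _)

lemma thickeningCutoff_eq_one (hs : 0 < s) {y : X} (hy : infDist y A ≤ r - s) :
    thickeningCutoff A r s y = 1 := by
  refine min_eq_left (le_max_of_le_right ?_)
  rw [le_div_iff₀ hs]
  linarith

lemma thickeningCutoff_eq_zero (hs : 0 < s) (hA : A.Nonempty) {y : X}
    (hy : y ∉ thickening r A) : thickeningCutoff A r s y = 0 := by
  rw [mem_thickening_iff_infDist_lt hA, not_lt] at hy
  rw [thickeningCutoff, max_eq_left (div_nonpos_of_nonpos_of_nonneg (by linarith) hs.le)]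
  exact min_eq_right zero_le_one

lemma lipschitzWith_thickeningCutoff (hs : 0 < s) :
    LipschitzWith (Real.toNNReal s⁻¹) (thickeningCutoff A r s) := by
  refine LipschitzWith.of_dist_le_mul fun y z => ?_
  rw [Real.coe_toNNReal _ (inv_nonneg.2 hs.le), Real.dist_eq]
  calc |thickeningCutoff A r s y - thickeningCutoff A r s z|
      ≤ |(r - infDist y A) / s - (r - infDist z A) / s| :=
        (abs_min_sub_min_le_max _ _ _ _).trans <| max_le (by simp) <|
          (abs_max_sub_max_le_max _ _ _ _).trans (max_le (by simp) le_rfl)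
    _ = s⁻¹ * |infDist z A - infDist y A| := by
        rw [← sub_div, abs_div, abs_of_pos hs, sub_sub_sub_cancel_left, div_eq_inv_mul]
    _ ≤ s⁻¹ * dist y z := by
        gcongr
        simpa only [NNReal.coe_one, one_mul, Real.dist_eq, dist_comm y] using
          (lipschitz_infDist_pt A).dist_le_mul z y

lemma pLip_thickeningCutoff_le (hs : 0 < s) (hsr : s < r) (hA : A.Nonempty) (x : X) :
    pLip (thickeningCutoff A r s) x ≤ (cthickening r A \ A).indicator (fun _ => s⁻¹) x := by
  by_cases hxA : x ∈ A
  · rw [indicator_of_notMem fun h => h.2 hxA]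
    refine (pLip_eq_zero_of_eventuallyEq ?_).le
    have hnear : ∀ᶠ y in 𝓝 x, infDist y A < r - s :=
      (continuous_infDist_pt A).continuousAt.eventually_lt continuousAt_const
        (by rw [infDist_zero_of_mem hxA]; linarith)
    filter_upwards [hnear] with y hy
    rw [thickeningCutoff_eq_one hs hy.le,
      thickeningCutoff_eq_one hs (by rw [infDist_zero_of_mem hxA]; linarith)]
  by_cases hxC : x ∈ cthickening r A
  · rw [indicator_of_mem (show x ∈ cthickening r A \ A from ⟨hxC, hxA⟩)]
    simpa only [Real.coe_toNNReal _ (inv_nonneg.2 hs.le)] using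
      pLip_le_of_lipschitzWith (lipschitzWith_thickeningCutoff (A := A) (r := r) hs) x
  · rw [indicator_of_notMem fun h => hxC h.1]
    refine (pLip_eq_zero_of_eventuallyEq ?_).le
    filter_upwards [isClosed_cthickening.isOpen_compl.mem_nhds hxC] with y hy
    rw [thickeningCutoff_eq_zero hs hA fun h => hy (thickening_subset_cthickening r A h),
      thickeningCutoff_eq_zero hs hA fun h => hxC (thickening_subset_cthickening r A h)]

end Cutoff

theorem two_mul_measureReal_mul_le_integral_abs_sub_integral {Ω : Type*} [MeasurableSpace Ω]
    {μ : Measure Ω} [IsProbabilityMeasure μ] {f : Ω → ℝ} {A B : Set Ω}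
    (hA : MeasurableSet A) (hB : MeasurableSet B) (hf : Integrable f μ)
    (hfA : ∀ y ∈ A, f y = 1) (hfB : ∀ y, f y ≤ B.indicator 1 y) :
    2 * μ.real A * (1 - μ.real B) ≤ ∫ y, |f y - ∫ z, f z ∂μ| ∂μ := by
  set m := ∫ z, f z ∂μ
  have hmB : m ≤ μ.real B := by
    simpa only [integral_indicator_one hB] using
      integral_mono hf ((integrable_const 1).indicator hB) hfB
  have hm1 : m ≤ 1 := hmB.trans measureReal_le_one
  have hfm : Integrable (fun y => f y - m) μ := hf.sub (integrable_const m)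
  have hfmA : EqOn (fun y => f y - m) (fun _ => 1 - m) A := fun y hy => by simp only [hfA y hy]
  -- On `A` the deviation `f - m` is the constant `1 - m ≥ 0`; as it has mean zero,
  -- its integral over `Aᶜ` is the negative of that over `A`.
  have honA : ∫ y in A, (f y - m) ∂μ = μ.real A * (1 - m) := by
    rw [setIntegral_congr_fun hA hfmA, setIntegral_const, smul_eq_mul]
  have hAbsA : ∫ y in A, |f y - m| ∂μ = μ.real A * (1 - m) := by
    rw [← honA]
    refine setIntegral_congr_fun hA fun y hy => abs_of_nonneg ?_
    rw [hfA y hy]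
    linarith
  have hsplit : ∫ y in A, (f y - m) ∂μ + ∫ y in Aᶜ, (f y - m) ∂μ = 0 := by
    rw [integral_add_compl hA hfm, integral_sub hf (integrable_const m), integral_const,
      probReal_univ, one_smul, sub_self]
  have hAbsAc : μ.real A * (1 - m) ≤ ∫ y in Aᶜ, |f y - m| ∂μ := by
    calc μ.real A * (1 - m) = ∫ y in Aᶜ, -(f y - m) ∂μ := by rw [integral_neg]; linarith
      _ ≤ ∫ y in Aᶜ, |f y - m| ∂μ :=
          integral_mono hfm.integrableOn.neg hfm.abs.integrableOn fun y => neg_le_abs _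
  rw [← integral_add_compl hA hfm.abs, hAbsA]
  nlinarith [measureReal_nonneg (μ := μ) (s := A)]

section MetricMeasure

variable [MeasurableSpace X] {υ : Measure X} {τ : ℝ}

lemma minkBoundary_eq_top_of_measure_lt_measure_closure {A : Set X}
    (h : υ A < υ (closure A)) : minkBoundary υ A = ⊤ := by
  have hjump : 0 < υ (closure A) - υ A := tsub_pos_of_lt h
  have hlim :
      Tendsto (fun r : ℝ => (υ (closure A) - υ A) / ENNReal.ofReal r) (𝓝[>] 0) (𝓝 ⊤) := by
    have : Tendsto (fun r : ℝ => (υ (closure A) - υ A) / ENNReal.ofReal r) (𝓝[>] 0)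
        (𝓝 ((υ (closure A) - υ A) / 0)) :=
      ENNReal.Tendsto.const_div ((ENNReal.continuous_ofReal.tendsto' 0 0 ENNReal.ofReal_zero)
        |>.mono_left nhdsWithin_le_nhds) (Or.inl ENNReal.zero_ne_top)
    rwa [ENNReal.div_zero hjump.ne'] at this
  refine top_le_iff.1 (hlim.liminf_eq.symm.le.trans (liminf_le_liminf ?_))
  filter_upwards [self_mem_nhdsWithin] with r (hr : 0 < r)
  gcongr
  exact closure_subset_thickening hr A

lemma measure_thickening_sub_div_ofReal [IsFiniteMeasure υ] {A : Set X} {ρ : ℝ} (hρ : 0 < ρ) :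
    (υ (thickening ρ A) - υ A) / ENNReal.ofReal ρ =
      ENNReal.ofReal ((υ.real (thickening ρ A) - υ.real A) / ρ) := by
  rw [ENNReal.ofReal_div_of_pos hρ, ENNReal.ofReal_sub _ measureReal_nonneg, ofReal_measureReal,
    ofReal_measureReal]

theorem PoincareFor.integral_abs_sub_integral_le [BoundedSpace X] [IsProbabilityMeasure υ]
    (hP : PoincareFor υ 1 1 τ) {f : X → ℝ} (hf : IsLipFun f) :
    ∫ y, |f y - ∫ z, f z ∂υ| ∂υ ≤ τ * diam (univ : Set X) * ∫ y, pLip f y ∂υ := by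
  obtain ⟨x₀⟩ := nonempty_of_isProbabilityMeasure υ
  have hball : ∀ R > diam (univ : Set X), ball x₀ R = univ := fun R hR =>
    eq_univ_of_forall fun y =>
      (dist_le_diam_of_mem (Bornology.isBounded_univ.2 ‹_›) trivial trivial).trans_lt hR
  have hR : ∀ R > diam (univ : Set X),
      ∫ y, |f y - ∫ z, f z ∂υ| ∂υ ≤ τ * R * ∫ y, pLip f y ∂υ := fun R hR => by
    have := hP x₀ R (diam_nonneg.trans_lt hR) f hf
    simpa only [hball R hR, Measure.restrict_univ, average_eq_integral, div_one, Real.rpow_one]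
      using this
  refine ge_of_tendsto (x := 𝓝[>] diam (univ : Set X)) ?_ (eventually_nhdsWithin_of_forall hR)
  exact ((continuous_const.mul continuous_id).mul continuous_const).continuousWithinAt.tendsto

theorem PoincareFor.two_mul_measureReal_mul_le [BoundedSpace X] [OpensMeasurableSpace X]
    [IsProbabilityMeasure υ] (hP : PoincareFor υ 1 1 τ) (hτ : 0 ≤ τ) {A : Set X}
    (hA : MeasurableSet A) (hne : A.Nonempty) {ρ : ℝ} (hρ : 0 < ρ) :
    2 * υ.real A * (1 - υ.real (thickening ρ A)) * ρ ≤
      τ * diam (univ : Set X) * (υ.real (thickening ρ A) - υ.real A) := by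
  have hτD : 0 ≤ τ * diam (univ : Set X) := mul_nonneg hτ diam_nonneg
  have hlt : ∀ s ∈ Ioo 0 ρ, 2 * υ.real A * (1 - υ.real (thickening ρ A)) * s ≤
      τ * diam (univ : Set X) * (υ.real (thickening ρ A) - υ.real A) := by
    rintro s ⟨hs, hsρ⟩
    obtain ⟨r, hsr, hrρ⟩ := exists_between hsρ
    have hlip : LipschitzWith (Real.toNNReal s⁻¹) (thickeningCutoff A r s) :=
      lipschitzWith_thickeningCutoff hs
    have hint : Integrable (thickeningCutoff A r s) υ :=
      .of_bound hlip.continuous.aestronglyMeasurable 1 (ae_of_all _ fun y => by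
        rw [Real.norm_eq_abs, abs_of_nonneg (thickeningCutoff_nonneg y)]
        exact thickeningCutoff_le_one y)
    have hle : ∀ y, thickeningCutoff A r s y ≤ (thickening ρ A).indicator 1 y := fun y => by
      by_cases hy : y ∈ thickening ρ A
      · simpa only [indicator_of_mem hy, Pi.one_apply] using thickeningCutoff_le_one y
      · rw [indicator_of_notMem hy, thickeningCutoff_eq_zero hs hne
          fun h => hy (thickening_mono hrρ.le A h)]
    have hdev := two_mul_measureReal_mul_le_integral_abs_sub_integral hA
      isOpen_thickening.measurableSet hint
      (fun y hy => thickeningCutoff_eq_one hs (by rw [infDist_zero_of_mem hy]; linarith)) hle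
    have hshell : MeasurableSet (cthickening r A \ A) :=
      isClosed_cthickening.measurableSet.diff hA
    have hgrad : ∫ y, pLip (thickeningCutoff A r s) y ∂υ ≤
        (υ.real (thickening ρ A) - υ.real A) * s⁻¹ :=
      calc ∫ y, pLip (thickeningCutoff A r s) y ∂υ
          ≤ ∫ y, (cthickening r A \ A).indicator (fun _ => s⁻¹) y ∂υ :=
            integral_mono_of_nonneg (ae_of_all _ (pLip_nonneg _))
              ((integrable_const _).indicator hshell)
              (ae_of_all _ (pLip_thickeningCutoff_le hs hsr hne))
        _ = υ.real (cthickening r A \ A) * s⁻¹ := by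
            rw [integral_indicator_const _ hshell, smul_eq_mul]
        _ ≤ (υ.real (thickening ρ A) - υ.real A) * s⁻¹ := by
            rw [← measureReal_sdiff (μ := υ) (self_subset_thickening hρ A) hA]
            exact mul_le_mul_of_nonneg_right (measureReal_mono
              (sdiff_subset_sdiff_left (cthickening_subset_thickening' hρ hrρ A))) (by positivity)
    calc 2 * υ.real A * (1 - υ.real (thickening ρ A)) * s
        ≤ τ * diam (univ : Set X) * (∫ y, pLip (thickeningCutoff A r s) y ∂υ) * s :=
          mul_le_mul_of_nonneg_right (hdev.trans (hP.integral_abs_sub_integral_le ⟨_, hlip⟩))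
            hs.le
      _ ≤ τ * diam (univ : Set X) * ((υ.real (thickening ρ A) - υ.real A) * s⁻¹) * s := by
          gcongr
      _ = τ * diam (univ : Set X) * (υ.real (thickening ρ A) - υ.real A) := by
          field_simp
  refine le_of_tendsto (x := 𝓝[<] ρ)
    ((continuous_const.mul continuous_id).continuousWithinAt.tendsto) ?_
  exact eventually_of_mem (Ioo_mem_nhdsLT hρ) hlt

theorem PoincareFor.le_minkBoundary [BoundedSpace X] [OpensMeasurableSpace X]
    [IsProbabilityMeasure υ] (hP : PoincareFor υ 1 1 τ) (hτ : 0 < τ)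
    (hD : 0 < diam (univ : Set X)) {A : Set X} (hA : MeasurableSet A) (hne : A.Nonempty)
    (hcl : υ (closure A) = υ A) :
    ENNReal.ofReal (2 * υ.real A * (1 - υ.real A) / (τ * diam (univ : Set X))) ≤
      minkBoundary υ A := by
  have hT : Tendsto (fun ρ => υ.real (thickening ρ A)) (𝓝[>] 0) (𝓝 (υ.real A)) := by
    have := tendsto_measure_thickening (μ := υ) (s := A) ⟨1, one_pos, measure_ne_top υ _⟩
    rw [hcl] at this
    exact (ENNReal.tendsto_toReal (measure_ne_top υ A)).comp this
  have hlim : Tendsto (fun ρ => ENNReal.ofReal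
        (2 * υ.real A * (1 - υ.real (thickening ρ A)) / (τ * diam (univ : Set X))))
      (𝓝[>] 0) (𝓝 (ENNReal.ofReal
        (2 * υ.real A * (1 - υ.real A) / (τ * diam (univ : Set X))))) :=
    ENNReal.tendsto_ofReal (((tendsto_const_nhds.sub hT).const_mul _).div_const _)
  refine hlim.liminf_eq.symm.le.trans (liminf_le_liminf ?_)
  filter_upwards [self_mem_nhdsWithin] with ρ (hρ : 0 < ρ)
  rw [measure_thickening_sub_div_ofReal hρ]
  refine ENNReal.ofReal_le_ofReal ((div_le_div_iff₀ (by positivity) hρ).2 ?_)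
  linarith [hP.two_mul_measureReal_mul_le hτ.le hA hne hρ]

end MetricMeasure

theorem stmt16_general {X : Type*} [MetricSpace X] [CompactSpace X] [MeasurableSpace X] [BorelSpace X]
    (υ : Measure X) [IsProbabilityMeasure υ]
    (τ : ℝ) (hτ : 0 < τ) (hnt : ∃ x y : X, x ≠ y)
    (hpoin : PoincareFor υ 1 1 τ) :
    ENNReal.ofReal (1 / (τ * Metric.diam (Set.univ : Set X))) ≤ cheeger υ := by
  obtain ⟨x, y, hxy⟩ := hnt
  have hD : 0 < diam (univ : Set X) :=
    (dist_pos.2 hxy).trans_le (dist_le_diam_of_mem isCompact_univ.isBounded trivial trivial)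
  refine le_iInf₂ fun A ⟨hA, hA0, hA2⟩ => ?_
  rw [ENNReal.le_div_iff_mul_le (Or.inl hA0.ne') (Or.inl (measure_ne_top υ A))]
  rcases (measure_mono subset_closure : υ A ≤ υ (closure A)).lt_or_eq with hlt | hcl
  · simp [minkBoundary_eq_top_of_measure_lt_measure_closure hlt]
  have ha : υ.real A ≤ 1 / 2 := by
    simpa [measureReal_def] using ENNReal.toReal_mono (by simp) hA2
  calc ENNReal.ofReal (1 / (τ * diam (univ : Set X))) * υ A
      = ENNReal.ofReal (υ.real A / (τ * diam (univ : Set X))) := by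
        rw [← ofReal_measureReal, ← ENNReal.ofReal_mul (by positivity), one_div_mul_eq_div]
    _ ≤ ENNReal.ofReal (2 * υ.real A * (1 - υ.real A) / (τ * diam (univ : Set X))) := by
        gcongr
        nlinarith [measureReal_nonneg (μ := υ) (s := A)]
    _ ≤ minkBoundary υ A :=
        hpoin.le_minkBoundary hτ hD hA (nonempty_of_measure_ne_zero hA0.ne') hcl.symm

/-- lower bound for the Cheeger constant from a `(1,1)`-Poincaré inequality. -/
theorem stmt16 {X : Type*} [MetricSpace X] [CompactSpace X] [MeasurableSpace X] [BorelSpace X]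
    (υ : Measure X) [IsProbabilityMeasure υ]
    (τ : ℝ) (hτ : 0 < τ) (hnt : ∃ x y : X, x ≠ y)
    (hna : ∀ x : X, υ {x} = 0) (hpoin : PoincareFor υ 1 1 τ) :
    ENNReal.ofReal (1 / (τ * Metric.diam (Set.univ : Set X))) ≤ cheeger υ :=
  stmt16_general υ τ hτ hnt hpoin
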